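/- For every n ≥ 1 and every d_min ≥ 1, there exist a residue a modulo n + 1 and a code C* of binary words of length n such that every x ∈ C* satisfies σ(x) ≡ a (mod n+1), the minimum Hamming distance of C* is at least d_min, and |C*| · V₂(n, d_min + 1) ≥ 2^{n−1}, where V₂(n, r) = Σ_{i=0}^{r} C(n, i). In particular, any two distinct words of C*, viewed as lists of bits, have no common subsequence of length n − 1, so C* additionally corrects a single deletion. -/

import Mathlib

/-!
Every word is determined by its moment modulo `n + 1` together with any subsequence `w` of
length `n - 1`: inserting a bit `b` at position `p` of `w` raises the moment by
`(p + 1) b + #(ones of w after p)`, a number in `[0, n]`, and two insertions with the same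
increase differ only by sliding the inserted bit along a run of equal bits. So every
Varshamov–Tenengolts code `VT_a = {x | σ(x) ≡ a}` corrects one deletion.

Flipping bit `j` of `y` changes `σ(y)` by `±(j + 1)`, so for every `t` one of `σ(y) ± t` is the
moment of a word at Hamming distance at most `1` from `y`. Hence each word is that close to at
least half of the `n + 1` codes `VT_a`, and by double counting the radius-one neighbourhood of
some `VT_a` has at least `2^(n-1)` words. A maximal `d`-separated subcode `C ⊆ VT_a` covers
`VT_a` with radius `d - 1`, so balls of radius `d` around `C` cover that neighbourhood.
-/

/-- The moment of a binary word `x = x_1 … x_n`: `σ(x) = ∑ i, i * x_i` (1-based indexing). -/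
def mom {n : ℕ} (x : Fin n → Bool) : ℕ :=
  ∑ i : Fin n, ((i : ℕ) + 1) * (if x i then 1 else 0)

open Finset

theorem card_le_two_mul_card_of_add_mem_or_sub_mem {G : Type*} [AddGroup G] [Fintype G]
    [DecidableEq G] {A : Finset G} (c : G) (h : ∀ t, c + t ∈ A ∨ c - t ∈ A) :
    Fintype.card G ≤ 2 * #A := by
  have hcover : univ ⊆ A.image (-c + ·) ∪ A.image (-· + c) := fun t _ => by
    rcases h t with ht | ht
    · exact mem_union_left _ (mem_image.2 ⟨_, ht, by simp⟩)
    · exact mem_union_right _ (mem_image.2 ⟨_, ht, by simp⟩)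
  calc Fintype.card G = #univ := rfl
    _ ≤ #(A.image (-c + ·)) + #(A.image (-· + c)) :=
      (card_le_card hcover).trans (card_union_le _ _)
    _ ≤ #A + #A := add_le_add card_image_le card_image_le
    _ = 2 * #A := (two_mul _).symm

section Hamming

variable {ι : Type*} [Fintype ι] {β : ι → Type*} [∀ i, DecidableEq (β i)]

theorem hammingDist_update_le_one [DecidableEq ι] (y : ∀ i, β i) (j : ι) (b : β j) :
    hammingDist y (Function.update y j b) ≤ 1 :=
  card_le_one.2 fun i hi k hk => by
    simp only [mem_filter, mem_univ, true_and] at hi hk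
    have hj : ∀ {i}, y i ≠ Function.update y j b i → i = j := fun hi =>
      of_not_not fun hij => hi (Function.update_of_ne hij b y).symm
    rw [hj hi, hj hk]

theorem exists_subset_pairwise_le_hammingDist_forall_exists_lt
    (S : Finset (∀ i, β i)) {d : ℕ} (hd : 0 < d) :
    ∃ C ⊆ S, (C : Set (∀ i, β i)).Pairwise (fun x y => d ≤ hammingDist x y) ∧
      ∀ x ∈ S, ∃ c ∈ C, hammingDist x c < d := by
  classical
  let codes := S.powerset.filter fun C : Finset (∀ i, β i) =>
    (C : Set (∀ i, β i)).Pairwise (d ≤ hammingDist · ·)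
  obtain ⟨C, hCmem, hCmax⟩ := exists_maximal (s := codes) ⟨∅, by simp [codes]⟩
  simp only [codes, mem_filter, mem_powerset] at hCmem hCmax
  refine ⟨C, hCmem.1, hCmem.2, fun x hx => ?_⟩
  by_contra! hfar
  have hxC : x ∉ C := fun hxC => (hfar x hxC).not_gt (by simpa using hd)
  have hsep : ((insert x C : Finset _) : Set (∀ i, β i)).Pairwise (d ≤ hammingDist · ·) := by
    rw [coe_insert, Set.pairwise_insert]
    exact ⟨hCmem.2, fun c hc _ => ⟨hfar c hc, hammingDist_comm x c ▸ hfar c hc⟩⟩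
  exact hxC (hCmax ⟨insert_subset hx hCmem.1, hsep⟩ (subset_insert x C) (mem_insert_self x C))

theorem card_hammingDist_le_le_sum_choose [DecidableEq ι] (c : ι → Bool) (r : ℕ) :
    #{z | hammingDist z c ≤ r} ≤ ∑ i ∈ range (r + 1), (Fintype.card ι).choose i := by
  calc #{z | hammingDist z c ≤ r}
      ≤ #((range (r + 1)).biUnion fun i => powersetCard i (univ : Finset ι)) := by
        refine card_le_card_of_injOn (fun z => ({i | z i ≠ c i} : Finset ι)) (fun z hz => ?_)
          fun z₁ _ z₂ _ h => ?_
        · simpa [hammingDist, Nat.lt_succ_iff] using hz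
        · funext i
          have := congrArg (i ∈ ·) h
          simp only [mem_filter, mem_univ, true_and, eq_iff_iff] at this
          revert this; cases z₁ i <;> cases z₂ i <;> cases c i <;> simp
    _ ≤ ∑ i ∈ range (r + 1), (Fintype.card ι).choose i := by
      simpa using card_biUnion_le (s := range (r + 1))
        (t := fun i => powersetCard i (univ : Finset ι))

theorem card_le_card_mul_sum_choose_of_forall_exists_hammingDist_le [DecidableEq ι]
    {T C : Finset (ι → Bool)} {r : ℕ} (h : ∀ y ∈ T, ∃ c ∈ C, hammingDist y c ≤ r) :
    #T ≤ #C * ∑ i ∈ range (r + 1), (Fintype.card ι).choose i := by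
  classical
  calc #T ≤ #(C.biUnion fun c => {z | hammingDist z c ≤ r}) := card_le_card fun y hy => by
        obtain ⟨c, hc, hyc⟩ := h y hy
        exact mem_biUnion.2 ⟨c, hc, by simpa using hyc⟩
    _ ≤ ∑ c ∈ C, #{z | hammingDist z c ≤ r} := card_biUnion_le
    _ ≤ #C * ∑ i ∈ range (r + 1), (Fintype.card ι).choose i := by
      simpa using sum_le_sum fun c (_ : c ∈ C) => card_hammingDist_le_le_sum_choose c r

end Hamming

namespace List

-- Prepending `b` moves every bit of `t` one position to the right.
def moment : List Bool → ℕ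
  | [] => 0
  | b :: t => b.toNat + moment t + t.count true

theorem count_true_ofFn {n : ℕ} (x : Fin n → Bool) :
    (ofFn x).count true = ∑ i, (x i).toNat := by
  induction n with
  | zero => simp
  | succ n ih =>
    rw [ofFn_succ, count_cons, ih, Fin.sum_univ_succ, add_comm]
    cases x 0 <;> rfl

theorem moment_ofFn {n : ℕ} (x : Fin n → Bool) : moment (ofFn x) = mom x := by
  induction n with
  | zero => simp [moment, mom]
  | succ n ih =>
    rw [ofFn_succ, moment, ih, count_true_ofFn, mom, mom, Fin.sum_univ_succ, add_assoc,
      ← Finset.sum_add_distrib]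
    congr 1
    · cases x 0 <;> rfl
    · refine Finset.sum_congr rfl fun i _ => ?_
      cases x i.succ <;> simp

def insertionShift (l : List Bool) (p : ℕ) (b : Bool) : ℕ :=
  (p + 1) * b.toNat + (l.drop p).count true

theorem insertionShift_le {l : List Bool} {p : ℕ} (hp : p ≤ l.length) (b : Bool) :
    insertionShift l p b ≤ l.length + 1 := by
  have := (l.drop p).count_le_length (a := true)
  rw [length_drop] at this
  cases b <;> simp [insertionShift] <;> omega

theorem moment_insertIdx (b : Bool) :
    ∀ {p : ℕ} {l : List Bool}, p ≤ l.length →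
      moment (l.insertIdx p b) = moment l + insertionShift l p b
  | 0, l, _ => by simp [moment, insertionShift]; ring
  | p + 1, c :: t, hp => by
    have hp : p ≤ t.length := by simpa using hp
    rw [insertIdx_succ_cons, moment, moment_insertIdx b hp, (perm_insertIdx b t hp).count_eq,
      moment]
    simp only [insertionShift, drop_succ_cons]
    cases b <;> simp <;> ring

theorem insertIdx_eq_insertIdx_of_forall_mem_eq (b : Bool) :
    ∀ {p q : ℕ} {l : List Bool}, p ≤ q → q ≤ l.length →
      (∀ c ∈ (l.drop p).take (q - p), c = b) → l.insertIdx p b = l.insertIdx q b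
  | _, 0, _, hpq, _, _ => by rw [Nat.le_zero.1 hpq]
  | 0, q + 1, c :: t, _, hq, hrun => by
    obtain rfl : c = b := hrun c (by simp)
    have := insertIdx_eq_insertIdx_of_forall_mem_eq c (p := 0) (Nat.zero_le q)
      (by simpa using hq) (fun d hd => hrun d (mem_cons_of_mem _ (by simpa using hd)))
    simpa [insertIdx_succ_cons] using this
  | p + 1, q + 1, c :: t, hpq, hq, hrun => by
    rw [insertIdx_succ_cons, insertIdx_succ_cons,
      insertIdx_eq_insertIdx_of_forall_mem_eq b (p := p) (q := q) (by omega) (by simpa using hq)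
        (by simpa using hrun)]

theorem insertIdx_eq_insertIdx_of_insertionShift_eq {w : List Bool} {p q : ℕ} {b b' : Bool}
    (hpq : p ≤ q) (hq : q ≤ w.length) (h : insertionShift w p b = insertionShift w q b') :
    w.insertIdx p b = w.insertIdx q b' := by
  set run := (w.drop p).take (q - p)
  have hcount : (w.drop p).count true = run.count true + (w.drop q).count true := by
    rw [← count_append, ← take_append_drop (q - p) (w.drop p), drop_drop,
      Nat.add_sub_cancel' hpq]
  have hrun_le : run.count true ≤ q - p := count_le_length.trans (by simp [run])
  have hrun_len : run.length = q - p := by simp [run]; omega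
  unfold insertionShift at h
  cases b <;> cases b' <;> simp only [Bool.toNat_false, Bool.toNat_true] at h
  · refine insertIdx_eq_insertIdx_of_forall_mem_eq false hpq hq fun c hc => ?_
    have : true ∉ run := count_eq_zero.1 (by omega)
    exact Bool.eq_false_iff.2 fun hct => this (hct ▸ hc)
  · omega
  · omega
  · refine insertIdx_eq_insertIdx_of_forall_mem_eq true hpq hq fun c hc => ?_
    exact ((count_eq_length (l := run)).1 (by omega) c hc).symm

theorem Sublist.exists_eq_insertIdx {α : Type*} :
    ∀ {w l : List α}, w <+ l → l.length = w.length + 1 →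
      ∃ p b, p ≤ w.length ∧ l = w.insertIdx p b
  | _, _, .slnil, h => by simp at h
  | w, _ :: _, .cons a hwl, h => by
    obtain rfl := hwl.eq_of_length (by simp at h; omega)
    exact ⟨0, a, Nat.zero_le _, rfl⟩
  | _ :: _, _ :: _, .cons_cons a hwl, h => by
    obtain ⟨p, b, hp, rfl⟩ := hwl.exists_eq_insertIdx (by simpa using h)
    exact ⟨p + 1, b, by simpa using hp, rfl⟩

theorem eq_of_sublist_of_moment_modEq {w x y : List Bool} (hwx : w <+ x) (hwy : w <+ y)
    (hx : x.length = w.length + 1) (hy : y.length = w.length + 1)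
    (h : x.moment ≡ y.moment [MOD w.length + 2]) : x = y := by
  obtain ⟨p, b, hp, rfl⟩ := hwx.exists_eq_insertIdx hx
  obtain ⟨q, b', hq, rfl⟩ := hwy.exists_eq_insertIdx hy
  rw [moment_insertIdx b hp, moment_insertIdx b' hq] at h
  have hshift : insertionShift w p b = insertionShift w q b' :=
    Nat.ModEq.eq_of_lt_of_lt (Nat.ModEq.add_left_cancel' _ h)
      (by have := insertionShift_le hp b; omega) (by have := insertionShift_le hq b'; omega)
  rcases le_total p q with hpq | hqp
  · exact insertIdx_eq_insertIdx_of_insertionShift_eq hpq hq hshift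
  · exact (insertIdx_eq_insertIdx_of_insertionShift_eq hqp hp hshift.symm).symm

end List

theorem eq_of_mom_modEq_of_sublist {n : ℕ} (hn : 1 ≤ n) {x y : Fin n → Bool}
    (h : mom x ≡ mom y [MOD n + 1]) {w : List Bool} (hw : w.length = n - 1)
    (hwx : w.Sublist (List.ofFn x)) (hwy : w.Sublist (List.ofFn y)) : x = y := by
  refine List.ofFn_injective (List.eq_of_sublist_of_moment_modEq hwx hwy ?_ ?_ ?_)
  · simp; omega
  · simp; omega
  · rwa [List.moment_ofFn, List.moment_ofFn, hw, show n - 1 + 2 = n + 1 by omega]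

theorem mom_update_add {n : ℕ} (y : Fin n → Bool) (j : Fin n) (b : Bool) :
    mom (Function.update y j b) + ((j : ℕ) + 1) * (if y j then 1 else 0)
      = mom y + ((j : ℕ) + 1) * (if b then 1 else 0) := by
  simp only [mom, ← add_sum_erase _ _ (mem_univ j), Function.update_self]
  rw [sum_congr rfl fun i hi => by rw [Function.update_of_ne (ne_of_mem_erase hi)]]
  ring

theorem exists_hammingDist_le_one_mom_eq_add_or_sub {n : ℕ} (y : Fin n → Bool)
    (t : ZMod (n + 1)) : ∃ z, hammingDist y z ≤ 1 ∧
      ((mom z : ZMod (n + 1)) = mom y + t ∨ (mom z : ZMod (n + 1)) = mom y - t) := by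
  rcases eq_or_ne t 0 with rfl | ht
  · exact ⟨y, by simp⟩
  have hval : t.val - 1 + 1 = t.val := Nat.sub_add_cancel (Nat.one_le_iff_ne_zero.2 (by simpa))
  set j : Fin n := ⟨t.val - 1, by have := ZMod.val_lt t; omega⟩
  have hjt : (((j : ℕ) + 1 : ℕ) : ZMod (n + 1)) = t := by
    simp only [j, hval, ZMod.natCast_zmod_val]
  refine ⟨Function.update y j (!y j), hammingDist_update_le_one y j _, ?_⟩
  have hmom := mom_update_add y j (!y j)
  cases hyj : y j <;> simp only [hyj, Bool.not_false, Bool.not_true, Bool.false_eq_true,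
    ↓reduceIte, mul_zero, mul_one, add_zero] at hmom ⊢
  · left; rw [← hjt, hmom]; push_cast; ring
  · right; rw [← hjt, ← hmom]; push_cast; ring

def vtCode (n : ℕ) (a : ZMod (n + 1)) : Finset (Fin n → Bool) :=
  {x | (mom x : ZMod (n + 1)) = a}

theorem exists_two_pow_le_two_mul_card_nbhd_vtCode (n : ℕ) : ∃ a : ZMod (n + 1),
    2 ^ n ≤ 2 * #{y : Fin n → Bool | ∃ z ∈ vtCode n a, hammingDist y z ≤ 1} := by
  let r (y : Fin n → Bool) (a : ZMod (n + 1)) : Prop :=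
    ∃ z ∈ vtCode n a, hammingDist y z ≤ 1
  have hreach (y) : n + 1 ≤ 2 * #(bipartiteAbove r univ y) := by
    simpa using card_le_two_mul_card_of_add_mem_or_sub_mem (A := bipartiteAbove r univ y)
      (mom y : ZMod (n + 1)) fun t => by
        obtain ⟨z, hyz, hz | hz⟩ := exists_hammingDist_le_one_mom_eq_add_or_sub y t
        · exact .inl (by simpa [bipartiteAbove, r, vtCode] using ⟨z, hz, hyz⟩)
        · exact .inr (by simpa [bipartiteAbove, r, vtCode] using ⟨z, hz, hyz⟩)
  have htotal : ∑ _a : ZMod (n + 1), 2 ^ n ≤ ∑ a, 2 * #(bipartiteBelow r univ a) := calc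
    ∑ _a : ZMod (n + 1), 2 ^ n = ∑ _y : Fin n → Bool, (n + 1) := by simp [mul_comm]
    _ ≤ ∑ y, 2 * #(bipartiteAbove r univ y) := sum_le_sum fun y _ => hreach y
    _ = ∑ a, 2 * #(bipartiteBelow r univ a) := by
      rw [← mul_sum, ← mul_sum, sum_card_bipartiteAbove_eq_sum_card_bipartiteBelow]
  obtain ⟨a, -, ha⟩ := exists_le_of_sum_le univ_nonempty htotal
  exact ⟨a, ha⟩

/-- For every `n ≥ 1`, `d_min ≥ 1` there is a residue `a` mod `n+1` and a
code `C*` of length `n` with all moments `≡ a (mod n+1)`, minimum Hamming distance at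
least `d_min`, and `|C*| · V₂(n, d_min+1) ≥ 2^(n−1)` where `V₂(n,r) = ∑_{i=0}^{r} C(n,i)`;
moreover distinct codewords have no common subsequence of length `n − 1`, so `C*` also
corrects a single deletion. -/
theorem stmt10 {n dmin : ℕ} (hn : 1 ≤ n) (hd : 1 ≤ dmin) :
    ∃ (a : ℕ) (C : Finset (Fin n → Bool)),
      (∀ x ∈ C, mom x % (n + 1) = a) ∧
      (∀ x ∈ C, ∀ y ∈ C, x ≠ y → dmin ≤ hammingDist x y) ∧
      2 ^ (n - 1) ≤ C.card * (∑ i ∈ Finset.range (dmin + 2), n.choose i) ∧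
      (∀ x ∈ C, ∀ y ∈ C, x ≠ y →
        ¬ ∃ w : List Bool, w.length = n - 1 ∧
          w.Sublist (List.ofFn x) ∧ w.Sublist (List.ofFn y)) := by
  obtain ⟨a, hnbhd⟩ := exists_two_pow_le_two_mul_card_nbhd_vtCode n
  obtain ⟨C, hCa, hsep, hcov⟩ :=
    exists_subset_pairwise_le_hammingDist_forall_exists_lt (vtCode n a) hd
  have hmom (x) (hx : x ∈ C) : mom x % (n + 1) = a.val := by
    rw [← ZMod.val_natCast, (mem_filter.1 (hCa hx)).2]
  have hcard := card_le_card_mul_sum_choose_of_forall_exists_hammingDist_le (r := dmin + 1)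
    (T := {y | ∃ z ∈ vtCode n a, hammingDist y z ≤ 1}) (C := C) fun y hy => by
      obtain ⟨z, hz, hyz⟩ := (mem_filter.1 hy).2
      obtain ⟨c, hc, hzc⟩ := hcov z hz
      exact ⟨c, hc, (hammingDist_triangle y z c).trans (by omega)⟩
  refine ⟨a.val, C, hmom, fun x hx y hy => hsep hx hy, ?_, ?_⟩
  · rw [Fintype.card_fin, add_assoc, one_add_one_eq_two] at hcard
    have : 2 ^ n = 2 * 2 ^ (n - 1) := by rw [← pow_succ', Nat.sub_add_cancel hn]
    omega
  · rintro x hx y hy hxy ⟨w, hw, hwx, hwy⟩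
    exact hxy (eq_of_mom_modEq_of_sublist hn ((hmom x hx).trans (hmom y hy).symm) hw hwx hwy)
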